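/- arXiv:2010.01779 — 3 statements merged into one kernel-verified Lean document; each statement's English description precedes it below -/
import Mathlib

section
/- Let S: ℝ → ℝ be strictly increasing and càdlàg with jump set D := {t : S(t) ≠ S(t^-)}. Then S restricted to ℝ∖D is a bijection onto the closure of S(ℝ) minus the set ⋃_{s∈D} {S(s^-), S(s)} (and minus the supremum of S if S is bounded above). -/
open Filter Function

/-- A strictly increasing càdlàg function S : ℝ → ℝ (unbounded below), restricted
to its set of continuity points ℝ∖D, is a bijection onto the closure of its range
minus the jump endpoints {S(s⁻), S(s)}, s ∈ D, and minus the supremum of S in the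
case S is bounded above (the supremum set being empty otherwise). -/
theorem stmt11 (S : ℝ → ℝ) (hmono : StrictMono S)
    (hrc : ∀ u : ℝ, ContinuousWithinAt S (Set.Ici u) u)
    (hbot : Tendsto S atBot atBot) :
    Set.BijOn S {t : ℝ | leftLim S t = S t}
      (closure (Set.range S) \
        ((⋃ s ∈ {t : ℝ | leftLim S t ≠ S t}, {leftLim S s, S s}) ∪
          {x : ℝ | IsLUB (Set.range S) x})) := by
  have hm : Monotone S := hmono.monotone
  refine ⟨?_, fun a _ b _ h => hmono.injective h, ?_⟩
  · -- MapsTo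
    intro t ht
    simp only [Set.mem_setOf_eq] at ht
    refine ⟨subset_closure ⟨t, rfl⟩, ?_⟩
    rintro (h | h)
    · simp only [Set.mem_iUnion, Set.mem_setOf_eq, Set.mem_insert_iff,
        Set.mem_singleton_iff] at h
      obtain ⟨s, hs, h1 | h1⟩ := h
      · -- S t = leftLim S s
        have hlt : leftLim S s < S s := lt_of_le_of_ne (hm.leftLim_le le_rfl) hs
        have hts : t < s := hmono.lt_iff_lt.mp (h1 ▸ hlt)
        have h2 : S ((t + s) / 2) ≤ leftLim S s := hm.le_leftLim (by linarith)
        have h3 : S t < S ((t + s) / 2) := hmono (by linarith)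
        linarith [h1 ▸ (h3.trans_le h2)]
      · exact hs ((hmono.injective h1) ▸ ht)
    · simp only [Set.mem_setOf_eq] at h
      exact absurd (h.1 ⟨t + 1, rfl⟩) (not_le.mpr (hmono (lt_add_one t)))
  · -- SurjOn
    intro x hx
    obtain ⟨hxc, hxn⟩ := hx
    simp only [Set.mem_union, not_or] at hxn
    obtain ⟨hxn1, hxn2⟩ := hxn
    -- x is not an upper bound of the range
    have hnub : ∃ u : ℝ, x < S u := by
      by_contra hub
      push_neg at hub
      apply hxn2
      refine ⟨fun y hy => ?_, fun y hy => ?_⟩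
      · obtain ⟨u, rfl⟩ := hy; exact hub u
      · exact (closure_minimal (fun z hz => hy hz) isClosed_Iic) hxc
    obtain ⟨u0, hu0⟩ := hnub
    set A : Set ℝ := {u | S u ≤ x} with hA
    have hAne : A.Nonempty := (hbot.eventually (eventually_le_atBot x)).exists
    have hAbdd : BddAbove A := ⟨u0, fun u hu =>
      le_of_lt (hmono.lt_iff_lt.mp (lt_of_le_of_lt hu hu0))⟩
    set t : ℝ := sSup A with htdef
    have h1 : ∀ u < t, S u ≤ x := by
      intro u hu
      obtain ⟨a, haA, hua⟩ := exists_lt_of_lt_csSup hAne hu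
      exact (hm hua.le).trans haA
    have h2 : ∀ u, t < u → x < S u := by
      intro u hu
      by_contra hle
      push_neg at hle
      exact absurd (le_csSup hAbdd hle) (not_le.mpr hu)
    have hll : leftLim S t ≤ x :=
      le_of_tendsto (hm.tendsto_leftLim t)
        (eventually_mem_nhdsWithin.mono fun u hu => h1 u hu)
    have hxt : x ≤ S t :=
      ge_of_tendsto ((hrc t).mono Set.Ioi_subset_Ici_self)
        (eventually_mem_nhdsWithin.mono fun u hu => (h2 u hu).le)
    rcases eq_or_lt_of_le hxt with heq | hlt
    · refine ⟨t, ?_, heq.symm⟩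
      simp only [Set.mem_setOf_eq]
      by_contra hne
      exact hxn1 (Set.mem_biUnion hne (Set.mem_insert_iff.mpr (Or.inr heq)))
    · exfalso
      have hD : leftLim S t ≠ S t := ne_of_lt (lt_of_le_of_lt hll hlt)
      rcases eq_or_lt_of_le hll with heq2 | hlt2
      · exact hxn1 (Set.mem_biUnion hD (Set.mem_insert_iff.mpr (Or.inl heq2.symm)))
      · obtain ⟨y, hyo, hys⟩ := mem_closure_iff.mp hxc
          (Set.Ioo (leftLim S t) (S t)) isOpen_Ioo ⟨hlt2, hlt⟩
        obtain ⟨u, rfl⟩ := hys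
        rcases lt_or_ge u t with hu | hu
        · exact absurd (hm.le_leftLim hu) (not_le.mpr hyo.1)
        · exact absurd (hm hu) (not_le.mpr hyo.2)
end

section
/- Let (M₁,d₁), (M₂,d₂), M, d, π be as in the previous gluing construction, let μ₁ be a finite Borel measure on M₁, and let μ₂ := μ₁ ∘ π^{-1} be its pushforward. Then the Prohorov distance between the images of μ₁ and μ₂ in (M,d) (under the canonical isometric embeddings ψ₁, ψ₂) satisfies d_P(μ₁∘ψ₁^{-1}, μ₂∘ψ₂^{-1}) ≤ (1/2)·dis(π). -/
open MeasureTheory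

/-! Each point `inl x` and its image `inr (π x)` are at distance exactly `dis π / 2` in the glued
space, so for `ε > dis π / 2` the `ε`-neighbourhood of `A` pulled back along `inr ∘ π` contains
`inl ⁻¹' A`. Hence `μ₁ (inl ⁻¹' A) ≤ (μ₁.map π) (inr ⁻¹' Aᵋ)` for every such `ε`. -/

/-- The distortion of a map π : M₁ → M₂ between metric spaces. -/
noncomputable def glueDis {M₁ M₂ : Type*} [MetricSpace M₁] [MetricSpace M₂]
    (π : M₁ → M₂) : ℝ :=
  sSup (Set.range fun p : M₁ × M₁ => |dist p.1 p.2 - dist (π p.1) (π p.2)|)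

/-- The glued distance on the disjoint union M₁ ⊕ M₂ associated with π. -/
noncomputable def glueDist {M₁ M₂ : Type*} [MetricSpace M₁] [MetricSpace M₂]
    (π : M₁ → M₂) : M₁ ⊕ M₂ → M₁ ⊕ M₂ → ℝ
  | Sum.inl z, Sum.inl z' => dist z z'
  | Sum.inr w, Sum.inr w' => dist w w'
  | Sum.inl z, Sum.inr w => glueDis π / 2 + ⨅ x : M₁, (dist z x + dist (π x) w)
  | Sum.inr w, Sum.inl z => glueDis π / 2 + ⨅ x : M₁, (dist z x + dist (π x) w)

section Glue

variable {M₁ M₂ : Type*} [MetricSpace M₁] [MetricSpace M₂] (π : M₁ → M₂)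

lemma glueDis_nonneg : 0 ≤ glueDis π :=
  Real.sSup_nonneg <| Set.forall_mem_range.2 fun _ => abs_nonneg _

lemma glueDist_inr_apply_inl (x : M₁) :
    glueDist π (Sum.inr (π x)) (Sum.inl x) = glueDis π / 2 := by
  have hinf : ⨅ y : M₁, (dist x y + dist (π y) (π x)) = 0 := by
    refine le_antisymm ?_ (Real.iInf_nonneg fun y => by positivity)
    have hbdd : BddBelow (Set.range fun y : M₁ => dist x y + dist (π y) (π x)) :=
      ⟨0, by rintro _ ⟨y, rfl⟩; positivity⟩
    simpa using ciInf_le hbdd x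
  simp only [glueDist, hinf, add_zero]

lemma inl_preimage_subset_preimage_inr_thickening {ε : ℝ} (hε : glueDis π / 2 < ε)
    (A : Set (M₁ ⊕ M₂)) :
    Sum.inl ⁻¹' A ⊆ π ⁻¹' (Sum.inr ⁻¹' {p | ∃ q ∈ A, glueDist π p q < ε}) :=
  fun x hx => ⟨Sum.inl x, hx, (glueDist_inr_apply_inl π x).trans_lt hε⟩

end Glue

theorem stmt13_general {M₁ M₂ : Type*} [MetricSpace M₁] [MetricSpace M₂]
    [MeasurableSpace M₁] [MeasurableSpace M₂]
    (π : M₁ → M₂) (hπm : Measurable π)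
    (μ₁ : Measure M₁) :
    sInf {ε : ℝ | 0 < ε ∧ ∀ A : Set (M₁ ⊕ M₂),
        μ₁ (Sum.inl ⁻¹' A)
          ≤ (μ₁.map π) (Sum.inr ⁻¹' {p : M₁ ⊕ M₂ | ∃ q ∈ A, glueDist π p q < ε})
            + ENNReal.ofReal ε}
      ≤ glueDis π / 2 := by
  refine le_of_forall_gt_imp_ge_of_dense fun ε hε => csInf_le ⟨0, fun _ h => h.1.le⟩ ?_
  refine ⟨(div_nonneg (glueDis_nonneg π) zero_le_two).trans_lt hε, fun A => ?_⟩
  calc μ₁ (Sum.inl ⁻¹' A)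
      ≤ μ₁ (π ⁻¹' (Sum.inr ⁻¹' {p | ∃ q ∈ A, glueDist π p q < ε})) :=
        measure_mono (inl_preimage_subset_preimage_inr_thickening π hε A)
    _ ≤ (μ₁.map π) (Sum.inr ⁻¹' {p | ∃ q ∈ A, glueDist π p q < ε}) :=
        Measure.le_map_apply hπm.aemeasurable _
    _ ≤ _ := le_self_add

/-- In the glued space M₁ ⊕ M₂, the Prohorov distance (defined via the condition
ν₁(A) ≤ ν₂(A^ε) + ε for all A) between the images of a finite measure μ₁ on M₁
and of its pushforward μ₂ = μ₁ ∘ π⁻¹ on M₂ is at most half of the distortion of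
π. -/
theorem stmt13 {M₁ M₂ : Type*} [MetricSpace M₁] [MetricSpace M₂] [Nonempty M₁]
    [MeasurableSpace M₁] [BorelSpace M₁] [MeasurableSpace M₂] [BorelSpace M₂]
    (π : M₁ → M₂) (hπ : Function.Surjective π) (hπm : Measurable π)
    (hbdd : BddAbove (Set.range fun p : M₁ × M₁ =>
      |dist p.1 p.2 - dist (π p.1) (π p.2)|))
    (μ₁ : Measure M₁) [IsFiniteMeasure μ₁] :
    sInf {ε : ℝ | 0 < ε ∧ ∀ A : Set (M₁ ⊕ M₂),
        μ₁ (Sum.inl ⁻¹' A)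
          ≤ (μ₁.map π) (Sum.inr ⁻¹' {p : M₁ ⊕ M₂ | ∃ q ∈ A, glueDist π p q < ε})
            + ENNReal.ofReal ε}
      ≤ glueDis π / 2 :=
  stmt13_general π hπm μ₁
end

section
/- Let ρ > 1 and let R_∞ := inf_n n^{-1} E[R^β(ω₀, ω_n)] where R^β is the effective resistance of the Mott network. Then R_∞ > 0. More precisely, for the linear test function f_n(i) = ((i/n) ∨ 0) ∧ 1 one has R^β(ω₀,ω_n)^{-1} ≤ Σ(n) := Σ_{i,j∈ℤ} c^{β,0}(ωᵢ,ω_j)(f_n(i)-f_n(j))², and E[nΣ(n)] ≤ 4(1-c)^{-1} Σ_{j≥0} c^j j² =: C₀ < ∞ where c = E[e^{-ω₁}] ∈ (0,1); hence by Markov's inequality P(nΣ(n) ≤ 2C₀) ≥ 1/2 uniformly in n, and therefore R_∞ ≥ inf_n n^{-1}E[Σ(n)^{-1}] ≥ (2C₀)^{-1}·(1/2) > 0. -/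
/-!
Write `f = linTest n`. Reindexing `j = i + k`, only the `n + |k| - 1` increments
`f i - f (i + k)` with `-|k| < i < n` are nonzero, each of size at most `min (|k| / n) 1`, so
`n * ∑ᵢ (f i - f (i + k))² ≤ 2 k²` and `E[n Σ(n)] ≤ 4 ∑_d cst^d d² ≤ C₀`. By Markov's inequality
`n Σ(n) ≤ 2 C₀` with probability at least `1 / 2`; there `R ≥ Σ(n)⁻¹ ≥ n / (2 C₀)`, and
integrating gives `n⁻¹ E[R] ≥ (4 C₀)⁻¹`.
-/

open MeasureTheory

/-- The linear test function f_n(i) = ((i/n) ∨ 0) ∧ 1. -/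
noncomputable def linTest (n : ℕ) (i : ℤ) : ℝ :=
  min (max ((i : ℝ) / (n : ℝ)) 0) 1

/-- The Dirichlet energy Σ(n) of the linear test function f_n. -/
noncomputable def sigmaEnergy {Ω : Type*} (c : ℤ → ℤ → Ω → ℝ) (n : ℕ) (a : Ω) : ℝ :=
  ∑' i : ℤ, ∑' j : ℤ, c i j a * (linTest n i - linTest n j) ^ 2

open scoped ENNReal

section LinTest

lemma linTest_nonneg (n : ℕ) (i : ℤ) : 0 ≤ linTest n i := by
  unfold linTest; positivity

lemma linTest_le_one (n : ℕ) (i : ℤ) : linTest n i ≤ 1 := min_le_right _ _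

lemma linTest_of_nonpos (n : ℕ) {i : ℤ} (hi : i ≤ 0) : linTest n i = 0 := by
  have : (i : ℝ) / n ≤ 0 := div_nonpos_of_nonpos_of_nonneg (by exact_mod_cast hi) n.cast_nonneg
  rw [linTest, max_eq_right this, min_eq_left zero_le_one]

lemma linTest_of_le {n : ℕ} (hn : 1 ≤ n) {i : ℤ} (hi : (n : ℤ) ≤ i) : linTest n i = 1 := by
  have : (1 : ℝ) ≤ i / n := by
    rw [one_le_div₀ (by exact_mod_cast hn)]; exact_mod_cast hi
  rw [linTest, max_eq_left (zero_le_one.trans this), min_eq_right this]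

lemma linTest_one_pos {n : ℕ} (hn : 1 ≤ n) : 0 < linTest n 1 := by
  have : (0 : ℝ) < ((1 : ℤ) : ℝ) / n := by
    have : (0 : ℝ) < n := by exact_mod_cast hn
    positivity
  exact lt_min (this.trans_le (le_max_left _ _)) one_pos

lemma abs_linTest_sub_le (n : ℕ) (i j : ℤ) :
    |linTest n i - linTest n j| ≤ |(i : ℝ) - j| / n := by
  refine (abs_min_sub_min_le_max _ _ _ _).trans ?_
  rw [sub_self, abs_zero]
  refine max_le ((abs_max_sub_max_le_abs _ _ _).trans_eq ?_) (by positivity)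
  rw [← sub_div, abs_div, Nat.abs_cast]

lemma abs_linTest_sub_le_one (n : ℕ) (i j : ℤ) : |linTest n i - linTest n j| ≤ 1 := by
  have := linTest_nonneg n i; have := linTest_nonneg n j
  have := linTest_le_one n i; have := linTest_le_one n j
  rw [abs_le]; constructor <;> linarith

lemma linTest_sub_linTest_add_eq_zero {n : ℕ} (hn : 1 ≤ n) (d : ℕ) {i : ℤ}
    (hi : i ∉ Finset.Ioo (-(d : ℤ)) n) : linTest n i - linTest n (i + d) = 0 := by
  rw [Finset.mem_Ioo, not_and_or, not_lt, not_lt] at hi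
  rcases hi with hi | hi
  · rw [linTest_of_nonpos n (by omega), linTest_of_nonpos n (by omega), sub_self]
  · rw [linTest_of_le hn hi, linTest_of_le hn (by omega), sub_self]

lemma mul_sum_linTest_sub_sq_le {n : ℕ} (hn : 1 ≤ n) (d : ℕ) :
    (n : ℝ) * ∑ i ∈ Finset.Ioo (-(d : ℤ)) n, (linTest n i - linTest n (i + d)) ^ 2
      ≤ 2 * (d : ℝ) ^ 2 := by
  set m : ℝ := min ((d : ℝ) / n) 1
  have hn' : (0 : ℝ) < n := by exact_mod_cast hn
  have hm0 : 0 ≤ m := by positivity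
  have hnm : n * m ≤ d := by
    rw [← le_div_iff₀' hn']; exact min_le_left _ _
  have hcard : ((Finset.Ioo (-(d : ℤ)) n).card : ℝ) ≤ n + d := by
    rw [Int.card_Ioo]; exact_mod_cast (show (n - -(d : ℤ) - 1).toNat ≤ n + d by omega)
  have hterm : ∀ i ∈ Finset.Ioo (-(d : ℤ)) n, (linTest n i - linTest n (i + d)) ^ 2 ≤ m ^ 2 := by
    intro i _
    refine sq_le_sq' (abs_le.mp ?_).1 (abs_le.mp ?_).2 <;>
    · refine le_min ((abs_linTest_sub_le n i (i + d)).trans_eq ?_) (abs_linTest_sub_le_one n _ _)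
      push_cast; rw [sub_add_cancel_left, abs_neg, abs_of_nonneg d.cast_nonneg]
  have hsum : ∑ i ∈ Finset.Ioo (-(d : ℤ)) n, (linTest n i - linTest n (i + d)) ^ 2
      ≤ (n + d) * m ^ 2 :=
    calc _ ≤ (Finset.Ioo (-(d : ℤ)) n).card • m ^ 2 := Finset.sum_le_card_nsmul _ _ _ hterm
      _ = (Finset.Ioo (-(d : ℤ)) n).card * m ^ 2 := nsmul_eq_mul _ _
      _ ≤ (n + d) * m ^ 2 := by gcongr
  calc (n : ℝ) * ∑ i ∈ Finset.Ioo (-(d : ℤ)) n, (linTest n i - linTest n (i + d)) ^ 2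
      ≤ n * ((n + d) * m ^ 2) := by gcongr
    _ = (n * m) ^ 2 + d * (n * m) * m := by ring
    _ ≤ d ^ 2 + d * d * 1 := by gcongr; exact min_le_right _ _
    _ = 2 * (d : ℝ) ^ 2 := by ring

lemma mul_tsum_linTest_sub_sq_le {n : ℕ} (hn : 1 ≤ n) (d : ℕ) :
    (n : ℝ≥0∞) * ∑' i : ℤ, ENNReal.ofReal ((linTest n i - linTest n (i + d)) ^ 2)
      ≤ 2 * (d : ℝ≥0∞) ^ 2 := by
  rw [tsum_eq_sum (s := Finset.Ioo (-(d : ℤ)) n) fun i hi => by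
      rw [linTest_sub_linTest_add_eq_zero hn d hi]; simp,
    ← ENNReal.ofReal_sum_of_nonneg fun _ _ => sq_nonneg _, ← ENNReal.ofReal_natCast,
    ← ENNReal.ofReal_mul n.cast_nonneg]
  refine (ENNReal.ofReal_le_ofReal (mul_sum_linTest_sub_sq_le hn d)).trans_eq ?_
  rw [ENNReal.ofReal_mul zero_le_two, ENNReal.ofReal_pow d.cast_nonneg, ENNReal.ofReal_natCast,
    ENNReal.ofReal_ofNat]

end LinTest

lemma tsum_int_comp_natAbs_le (g : ℕ → ℝ≥0∞) : ∑' k : ℤ, g k.natAbs ≤ 2 * ∑' d, g d := by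
  rw [← tsum_nat_add_neg_add_one ENNReal.summable]
  calc ∑' d : ℕ, (g (d : ℤ).natAbs + g (-(d + 1) : ℤ).natAbs)
      = ∑' d, g d + ∑' d, g (d + 1) := by
        rw [← ENNReal.tsum_add]; congr! 2
    _ ≤ ∑' d, g d + ∑' d, g d :=
        add_le_add le_rfl (ENNReal.tsum_comp_le_tsum_of_injective (add_left_injective 1) g)
    _ = 2 * ∑' d, g d := (two_mul _).symm

lemma tsum_tsum_le_two_mul_tsum_shift (F : ℤ → ℤ → ℝ≥0∞) (hF : ∀ i j, F i j = F j i) :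
    ∑' i, ∑' j, F i j ≤ 2 * ∑' d : ℕ, ∑' i, F i (i + d) := by
  have hshift : ∀ k : ℤ, ∑' i, F i (i + k) = ∑' i, F i (i + k.natAbs) := by
    intro k
    rcases Int.natAbs_eq k with hk | hk
    · rw [← hk]
    · rw [← (Equiv.addRight (k.natAbs : ℤ)).tsum_eq]
      refine tsum_congr fun i => ?_
      rw [Equiv.coe_addRight, hF, show i + k.natAbs + k = i by omega]
  calc ∑' i, ∑' j, F i j = ∑' i, ∑' k : ℤ, F i (i + k) :=
        tsum_congr fun i => ((Equiv.addLeft i).tsum_eq (F i)).symm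
    _ = ∑' k : ℤ, ∑' i, F i (i + k) := ENNReal.tsum_comm
    _ = ∑' k : ℤ, ∑' i, F i (i + k.natAbs) := tsum_congr hshift
    _ ≤ 2 * ∑' d : ℕ, ∑' i, F i (i + d) :=
        tsum_int_comp_natAbs_le fun d => ∑' i, F i (i + d)

lemma mul_tsum_tsum_linTest_sub_sq_le {n : ℕ} (hn : 1 ≤ n) (w : ℕ → ℝ≥0∞) :
    (n : ℝ≥0∞) * ∑' i : ℤ, ∑' j : ℤ,
        w (i - j).natAbs * ENNReal.ofReal ((linTest n i - linTest n j) ^ 2)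
      ≤ 4 * ∑' d, w d * (d : ℝ≥0∞) ^ 2 := by
  have hsymm : ∀ i j : ℤ, w (i - j).natAbs * ENNReal.ofReal ((linTest n i - linTest n j) ^ 2)
      = w (j - i).natAbs * ENNReal.ofReal ((linTest n j - linTest n i) ^ 2) := by
    intro i j; rw [← Int.natAbs_neg, neg_sub, ← neg_sq, neg_sub]
  calc (n : ℝ≥0∞) * ∑' i : ℤ, ∑' j : ℤ,
        w (i - j).natAbs * ENNReal.ofReal ((linTest n i - linTest n j) ^ 2)
      ≤ n * (2 * ∑' d : ℕ, ∑' i : ℤ,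
          w d * ENNReal.ofReal ((linTest n i - linTest n (i + d)) ^ 2)) := by
        gcongr
        refine (tsum_tsum_le_two_mul_tsum_shift _ hsymm).trans_eq ?_
        simp only [sub_add_cancel_left, Int.natAbs_neg, Int.natAbs_natCast]
    _ = 2 * ∑' d, w d * (n * ∑' i : ℤ, ENNReal.ofReal ((linTest n i - linTest n (i + d)) ^ 2)) := by
        simp_rw [ENNReal.tsum_mul_left, mul_left_comm (w _) (n : ℝ≥0∞), ENNReal.tsum_mul_left]
        exact mul_left_comm _ _ _
    _ ≤ 2 * ∑' d, w d * (2 * (d : ℝ≥0∞) ^ 2) := by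
        gcongr 2 * ∑' d, w d * ?_ with d
        exact mul_tsum_linTest_sub_sq_le hn d
    _ = 4 * ∑' d, w d * (d : ℝ≥0∞) ^ 2 := by
        simp_rw [mul_left_comm _ (2 : ℝ≥0∞), ENNReal.tsum_mul_left, ← mul_assoc]; norm_num

lemma summable_pow_mul_sq {r : ℝ} (h0 : 0 ≤ r) (h1 : r < 1) :
    Summable fun j : ℕ => r ^ j * (j : ℝ) ^ 2 :=
  (summable_pow_mul_geometric_of_norm_lt_one 2 (by rwa [Real.norm_of_nonneg h0])).congr
    fun j => mul_comm _ _

lemma tsum_ofReal_pow_mul_sq {r : ℝ} (h0 : 0 ≤ r) (h1 : r < 1) :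
    ∑' d : ℕ, ENNReal.ofReal (r ^ d) * (d : ℝ≥0∞) ^ 2
      = ENNReal.ofReal (∑' d : ℕ, r ^ d * (d : ℝ) ^ 2) := by
  rw [ENNReal.ofReal_tsum_of_nonneg (fun _ => by positivity) (summable_pow_mul_sq h0 h1)]
  refine tsum_congr fun d => ?_
  rw [ENNReal.ofReal_mul (by positivity), ENNReal.ofReal_pow d.cast_nonneg, ENNReal.ofReal_natCast]

section Probability

variable {Ω : Type*} [MeasurableSpace Ω]

lemma half_le_measure_le_two_mul {μ : Measure Ω} [IsProbabilityMeasure μ] {f : Ω → ℝ≥0∞}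
    (hf : AEMeasurable f μ) {C : ℝ≥0∞} (hC0 : C ≠ 0) (hCtop : C ≠ ⊤) (hint : ∫⁻ a, f a ∂μ ≤ C) :
    1 / 2 ≤ μ {a | f a ≤ 2 * C} := by
  have hmarkov : μ {a | 2 * C ≤ f a} ≤ 1 / 2 :=
    calc μ {a | 2 * C ≤ f a} ≤ (∫⁻ a, f a ∂μ) / (2 * C) :=
          meas_ge_le_lintegral_div hf (by simp [hC0]) (ENNReal.mul_ne_top (by simp) hCtop)
      _ ≤ C / (2 * C) := by gcongr
      _ = 1 / 2 := by
          rw [← one_mul C, ← mul_assoc, mul_one, ENNReal.mul_div_mul_right _ _ hC0 hCtop]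
  have hcover : (1 : ℝ≥0∞) ≤ μ {a | f a ≤ 2 * C} + 1 / 2 :=
    calc (1 : ℝ≥0∞) = μ ({a | f a ≤ 2 * C} ∪ {a | 2 * C ≤ f a}) := by
          rw [← measure_univ (μ := μ)]; congr 1; ext a; simp [le_total]
      _ ≤ μ {a | f a ≤ 2 * C} + μ {a | 2 * C ≤ f a} := measure_union_le _ _
      _ ≤ μ {a | f a ≤ 2 * C} + 1 / 2 := by gcongr
  calc (1 / 2 : ℝ≥0∞) = 1 - 1 / 2 := by norm_num
    _ ≤ μ {a | f a ≤ 2 * C} := tsub_le_iff_right.mpr hcover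

lemma half_mul_le_integral {μ : Measure Ω} [IsFiniteMeasure μ] {f : Ω → ℝ}
    (hf0 : 0 ≤ᵐ[μ] f) (hf : Integrable f μ) {ε : ℝ} (hε : 0 ≤ ε)
    (hlarge : 1 / 2 ≤ μ {a | ε ≤ f a}) : ε / 2 ≤ ∫ a, f a ∂μ := by
  have hreal : 1 / 2 ≤ μ.real {a | ε ≤ f a} := by
    have := ENNReal.toReal_mono (measure_ne_top μ _) hlarge
    simpa [measureReal_def] using this
  calc ε / 2 = ε * (1 / 2) := by ring
    _ ≤ ε * μ.real {a | ε ≤ f a} := by gcongr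
    _ ≤ ∫ a, f a ∂μ := mul_meas_ge_le_integral_of_nonneg hf0 hf ε

lemma inv_four_mul_le_sInf_inv_mul_integral {μ : Measure Ω} [IsFiniteMeasure μ]
    {R : ℕ → Ω → ℝ} (hR0 : ∀ n, 0 ≤ᵐ[μ] R n) (hR : ∀ n, Integrable (R n) μ) {C : ℝ} (hC : 0 < C)
    (hlarge : ∀ n : ℕ, 1 ≤ n → 1 / 2 ≤ μ {a | n / (2 * C) ≤ R n a}) :
    (4 * C)⁻¹ ≤ sInf {x : ℝ | ∃ n : ℕ, 1 ≤ n ∧ x = (n : ℝ)⁻¹ * ∫ a, R n a ∂μ} := by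
  refine le_csInf ⟨_, 1, le_rfl, rfl⟩ ?_
  rintro _ ⟨n, hn, rfl⟩
  have hn' : (0 : ℝ) < n := by exact_mod_cast hn
  calc (4 * C)⁻¹ = (n : ℝ)⁻¹ * (n / (2 * C) / 2) := by field_simp; ring
    _ ≤ (n : ℝ)⁻¹ * ∫ a, R n a ∂μ := by
        gcongr; exact half_mul_le_integral (hR0 n) (hR n) (by positivity) (hlarge n hn)

end Probability

/-- `sigmaEnergy` computed in `ℝ≥0∞`, where a divergent series is `⊤` rather than the junk
value `0` of the real `tsum`. -/
noncomputable def eSigmaEnergy {Ω : Type*} (c : ℤ → ℤ → Ω → ℝ) (n : ℕ) (a : Ω) : ℝ≥0∞ :=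
  ∑' i : ℤ, ∑' j : ℤ, ENNReal.ofReal (c i j a * (linTest n i - linTest n j) ^ 2)

section Energy

variable {Ω : Type*} {c : ℤ → ℤ → Ω → ℝ}

lemma sigmaEnergy_nonneg (hc : ∀ i j a, 0 ≤ c i j a) (n : ℕ) (a : Ω) :
    0 ≤ sigmaEnergy c n a :=
  tsum_nonneg fun _ => tsum_nonneg fun _ => mul_nonneg (hc _ _ _) (sq_nonneg _)

lemma sigmaEnergy_eq_toReal (hc : ∀ i j a, 0 ≤ c i j a) {n : ℕ} {a : Ω}
    (hfin : eSigmaEnergy c n a ≠ ⊤) : sigmaEnergy c n a = (eSigmaEnergy c n a).toReal := by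
  have hrow : ∀ i : ℤ,
      ∑' j : ℤ, ENNReal.ofReal (c i j a * (linTest n i - linTest n j) ^ 2) ≠ ⊤ :=
    fun i => ne_top_of_le_ne_top hfin (ENNReal.le_tsum i)
  rw [eSigmaEnergy, ENNReal.tsum_toReal_eq hrow]
  refine tsum_congr fun i => ?_
  rw [ENNReal.tsum_toReal_eq fun _ => ENNReal.ofReal_ne_top]
  exact tsum_congr fun j => (ENNReal.toReal_ofReal (mul_nonneg (hc _ _ _) (sq_nonneg _))).symm

lemma ofReal_sigmaEnergy_le (hc : ∀ i j a, 0 ≤ c i j a) (n : ℕ) (a : Ω) :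
    ENNReal.ofReal (sigmaEnergy c n a) ≤ eSigmaEnergy c n a := by
  by_cases hfin : eSigmaEnergy c n a = ⊤
  · exact hfin ▸ le_top
  · rw [sigmaEnergy_eq_toReal hc hfin]; exact ENNReal.ofReal_toReal_le

lemma measurable_eSigmaEnergy [MeasurableSpace Ω] (hm : ∀ i j, Measurable (c i j)) (n : ℕ) :
    Measurable (eSigmaEnergy c n) :=
  Measurable.tsum fun i => Measurable.tsum fun j => ((hm i j).mul_const _).ennreal_ofReal

lemma mul_lintegral_eSigmaEnergy_le [MeasurableSpace Ω] {ℙ : Measure Ω}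
    (hm : ∀ i j, Measurable (c i j)) (w : ℕ → ℝ≥0∞)
    (hE : ∀ i j, ∫⁻ a, ENNReal.ofReal (c i j a) ∂ℙ ≤ w (i - j).natAbs) {n : ℕ} (hn : 1 ≤ n) :
    (n : ℝ≥0∞) * ∫⁻ a, eSigmaEnergy c n a ∂ℙ ≤ 4 * ∑' d, w d * (d : ℝ≥0∞) ^ 2 := by
  have hmeas : ∀ i j,
      Measurable fun a => ENNReal.ofReal (c i j a * (linTest n i - linTest n j) ^ 2) :=
    fun i j => ((hm i j).mul_const _).ennreal_ofReal
  have hterm : ∀ i j, ∫⁻ a, ENNReal.ofReal (c i j a * (linTest n i - linTest n j) ^ 2) ∂ℙ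
      ≤ w (i - j).natAbs * ENNReal.ofReal ((linTest n i - linTest n j) ^ 2) := by
    intro i j
    simp_rw [mul_comm (c i j _), ENNReal.ofReal_mul (sq_nonneg _)]
    rw [lintegral_const_mul' _ _ ENNReal.ofReal_ne_top, mul_comm]
    gcongr
    exact hE i j
  calc (n : ℝ≥0∞) * ∫⁻ a, eSigmaEnergy c n a ∂ℙ
      = n * ∑' i, ∑' j, ∫⁻ a, ENNReal.ofReal (c i j a * (linTest n i - linTest n j) ^ 2) ∂ℙ := by
        simp only [eSigmaEnergy]
        rw [lintegral_tsum fun i => (Measurable.tsum fun j => hmeas i j).aemeasurable]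
        congr 1
        exact tsum_congr fun i => lintegral_tsum fun j => (hmeas i j).aemeasurable
    _ ≤ n * ∑' i : ℤ, ∑' j : ℤ,
        w (i - j).natAbs * ENNReal.ofReal ((linTest n i - linTest n j) ^ 2) := by
        gcongr with i j; exact hterm i j
    _ ≤ 4 * ∑' d, w d * (d : ℝ≥0∞) ^ 2 := mul_tsum_tsum_linTest_sub_sq_le hn w

lemma lintegral_natCast_mul_eSigmaEnergy_le [MeasurableSpace Ω] {ℙ : Measure Ω}
    (hm : ∀ i j, Measurable (c i j)) {r : ℝ} (h0 : 0 ≤ r) (h1 : r < 1)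
    (hE : ∀ i j, ∫⁻ a, ENNReal.ofReal (c i j a) ∂ℙ ≤ ENNReal.ofReal (r ^ (i - j).natAbs))
    {n : ℕ} (hn : 1 ≤ n) :
    ∫⁻ a, (n : ℝ≥0∞) * eSigmaEnergy c n a ∂ℙ
      ≤ ENNReal.ofReal (4 * ∑' j : ℕ, r ^ j * (j : ℝ) ^ 2) := by
  rw [lintegral_const_mul _ (measurable_eSigmaEnergy hm n), ENNReal.ofReal_mul zero_le_four,
    ENNReal.ofReal_ofNat, ← tsum_ofReal_pow_mul_sq h0 h1]
  exact mul_lintegral_eSigmaEnergy_le hm (fun d => ENNReal.ofReal (r ^ d)) hE hn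

lemma eSigmaEnergy_ne_top_of_mul_le {n : ℕ} (hn : n ≠ 0) {a : Ω} {C : ℝ}
    (h : (n : ℝ≥0∞) * eSigmaEnergy c n a ≤ ENNReal.ofReal C) : eSigmaEnergy c n a ≠ ⊤ := by
  intro htop
  rw [htop, ENNReal.mul_top (by exact_mod_cast hn)] at h
  exact ENNReal.ofReal_ne_top (top_le_iff.mp h)

lemma mul_sigmaEnergy_le_of_mul_eSigmaEnergy_le (hc : ∀ i j a, 0 ≤ c i j a) {n : ℕ} (hn : n ≠ 0)
    {a : Ω} {C : ℝ} (hC : 0 ≤ C) (h : (n : ℝ≥0∞) * eSigmaEnergy c n a ≤ ENNReal.ofReal C) :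
    (n : ℝ) * sigmaEnergy c n a ≤ C := by
  rw [sigmaEnergy_eq_toReal hc (eSigmaEnergy_ne_top_of_mul_le hn h)]
  have := ENNReal.toReal_mono ENNReal.ofReal_ne_top h
  rwa [ENNReal.toReal_mul, ENNReal.toReal_natCast, ENNReal.toReal_ofReal hC] at this

lemma sigmaEnergy_pos (hc : ∀ i j a, 0 ≤ c i j a) (hc01 : ∀ a, 0 < c 0 1 a) {n : ℕ} (hn : 1 ≤ n)
    {a : Ω} (hfin : eSigmaEnergy c n a ≠ ⊤) : 0 < sigmaEnergy c n a := by
  have hedge : 0 < c 0 1 a * (linTest n 0 - linTest n 1) ^ 2 := by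
    rw [linTest_of_nonpos n le_rfl, zero_sub, neg_sq]
    exact mul_pos (hc01 a) (pow_pos (linTest_one_pos hn) 2)
  have hle : ENNReal.ofReal (c 0 1 a * (linTest n 0 - linTest n 1) ^ 2) ≤ eSigmaEnergy c n a :=
    (ENNReal.le_tsum 1).trans (ENNReal.le_tsum (f := fun i => ∑' j, _) 0)
  rw [sigmaEnergy_eq_toReal hc hfin]
  exact ENNReal.toReal_pos ((ENNReal.ofReal_pos.mpr hedge).trans_le hle).ne' hfin

lemma div_le_inv_sigmaEnergy (hc : ∀ i j a, 0 ≤ c i j a) (hc01 : ∀ a, 0 < c 0 1 a) {n : ℕ}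
    (hn : 1 ≤ n) {a : Ω} {C : ℝ} (hC : 0 < C)
    (h : (n : ℝ≥0∞) * eSigmaEnergy c n a ≤ ENNReal.ofReal C) :
    (n : ℝ) / C ≤ (sigmaEnergy c n a)⁻¹ := by
  have hn0 : n ≠ 0 := by omega
  have hpos := sigmaEnergy_pos hc hc01 hn (eSigmaEnergy_ne_top_of_mul_le hn0 h)
  rw [div_le_iff₀ hC, ← div_eq_inv_mul, le_div_iff₀ hpos]
  exact mul_sigmaEnergy_le_of_mul_eSigmaEnergy_le hc hn0 hC.le h

end Energy

theorem stmt18_general {Ω : Type*} [MeasurableSpace Ω] (ℙ : Measure Ω) [IsProbabilityMeasure ℙ]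
    (cst : ℝ) (h0 : 0 < cst) (h1 : cst < 1)
    (c : ℤ → ℤ → Ω → ℝ) (hm : ∀ i j, Measurable (c i j)) (hnn : ∀ i j a, 0 ≤ c i j a)
    (hcpos : ∀ (i : ℤ) (a : Ω), 0 < c i (i + 1) a)
    (hE : ∀ i j, ∫⁻ a, ENNReal.ofReal (c i j a) ∂ℙ ≤ ENNReal.ofReal (cst ^ (i - j).natAbs))
    (R : ℕ → Ω → ℝ) (hRint : ∀ n, Integrable (R n) ℙ)
    (hR : ∀ n a, (sigmaEnergy c n a)⁻¹ ≤ R n a) :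
    (∀ n : ℕ, 1 ≤ n →
      ∫⁻ a, ENNReal.ofReal ((n : ℝ) * sigmaEnergy c n a) ∂ℙ
        ≤ ENNReal.ofReal (4 * (1 - cst)⁻¹ * ∑' j : ℕ, cst ^ j * (j : ℝ) ^ 2)) ∧
    (∀ n : ℕ, 1 ≤ n →
      (1 / 2 : ENNReal) ≤
        ℙ {a | (n : ℝ) * sigmaEnergy c n a
            ≤ 2 * (4 * (1 - cst)⁻¹ * ∑' j : ℕ, cst ^ j * (j : ℝ) ^ 2)}) ∧
    (4 * (4 * (1 - cst)⁻¹ * ∑' j : ℕ, cst ^ j * (j : ℝ) ^ 2))⁻¹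
      ≤ sInf {x : ℝ | ∃ n : ℕ, 1 ≤ n ∧ x = (n : ℝ)⁻¹ * ∫ a, R n a ∂ℙ} := by
  set S := ∑' j : ℕ, cst ^ j * (j : ℝ) ^ 2
  set C₀ := 4 * (1 - cst)⁻¹ * S
  have hS : 0 < S := (summable_pow_mul_sq h0.le h1).tsum_pos (fun _ => by positivity) 1 (by simpa)
  have hinv : 1 ≤ (1 - cst)⁻¹ := (one_le_inv₀ (by linarith)).mpr (by linarith)
  have hC₀ : 0 < C₀ := by positivity
  have hexp : ∀ n : ℕ, 1 ≤ n → ∫⁻ a, (n : ℝ≥0∞) * eSigmaEnergy c n a ∂ℙ ≤ ENNReal.ofReal C₀ :=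
    fun n hn => (lintegral_natCast_mul_eSigmaEnergy_le hm h0.le h1 hE hn).trans
      (ENNReal.ofReal_le_ofReal (by nlinarith))
  have hgood : ∀ n : ℕ, 1 ≤ n →
      1 / 2 ≤ ℙ {a | (n : ℝ≥0∞) * eSigmaEnergy c n a ≤ ENNReal.ofReal (2 * C₀)} := by
    intro n hn
    rw [ENNReal.ofReal_mul zero_le_two, ENNReal.ofReal_ofNat]
    exact half_le_measure_le_two_mul ((measurable_eSigmaEnergy hm n).const_mul _).aemeasurable
      (by simpa using hC₀) ENNReal.ofReal_ne_top (hexp n hn)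
  have hc01 : ∀ a, 0 < c 0 1 a := fun a => by simpa using hcpos 0 a
  refine ⟨fun n hn => (lintegral_mono fun a => ?_).trans (hexp n hn),
    fun n hn => (hgood n hn).trans (measure_mono fun a ha =>
      mul_sigmaEnergy_le_of_mul_eSigmaEnergy_le hnn (by omega) (by positivity) ha),
    inv_four_mul_le_sInf_inv_mul_integral
      (fun n => ae_of_all _ fun a => (inv_nonneg.mpr (sigmaEnergy_nonneg hnn n a)).trans (hR n a))
      hRint hC₀ fun n hn => (hgood n hn).trans (measure_mono fun a ha =>
        (div_le_inv_sigmaEnergy hnn hc01 hn (by positivity) ha).trans (hR n a))⟩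
  rw [ENNReal.ofReal_mul n.cast_nonneg, ENNReal.ofReal_natCast]
  exact mul_le_mul_right (ofReal_sigmaEnergy_le hnn n a) _

/-- Positivity of the limiting resistivity constant in the homogenisation regime
ρ > 1: with E[c(ωᵢ,ω_j)] ≤ cc^{|i-j|} (cc ∈ (0,1)) and C₀ := 4(1-cc)⁻¹ Σ_j cc^j j²,
one has E[nΣ(n)] ≤ C₀ for all n ≥ 1, hence P(nΣ(n) ≤ 2C₀) ≥ 1/2, and therefore
R_∞ = inf_{n≥1} n⁻¹E[R(ω₀,ω_n)] ≥ (4C₀)⁻¹ > 0 for resistances dominating the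
inverse Dirichlet energy. -/
theorem stmt18 {Ω : Type*} [MeasurableSpace Ω] (ℙ : Measure Ω) [IsProbabilityMeasure ℙ]
    (cst : ℝ) (h0 : 0 < cst) (h1 : cst < 1)
    (c : ℤ → ℤ → Ω → ℝ) (hm : ∀ i j, Measurable (c i j)) (hnn : ∀ i j a, 0 ≤ c i j a)
    (hcpos : ∀ (i : ℤ) (a : Ω), 0 < c i (i + 1) a)
    (hE : ∀ i j, ∫⁻ a, ENNReal.ofReal (c i j a) ∂ℙ ≤ ENNReal.ofReal (cst ^ (i - j).natAbs))
    (R : ℕ → Ω → ℝ) (hRnn : ∀ n a, 0 ≤ R n a) (hRint : ∀ n, Integrable (R n) ℙ)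
    (hR : ∀ n a, (sigmaEnergy c n a)⁻¹ ≤ R n a) :
    (∀ n : ℕ, 1 ≤ n →
      ∫⁻ a, ENNReal.ofReal ((n : ℝ) * sigmaEnergy c n a) ∂ℙ
        ≤ ENNReal.ofReal (4 * (1 - cst)⁻¹ * ∑' j : ℕ, cst ^ j * (j : ℝ) ^ 2)) ∧
    (∀ n : ℕ, 1 ≤ n →
      (1 / 2 : ENNReal) ≤
        ℙ {a | (n : ℝ) * sigmaEnergy c n a
            ≤ 2 * (4 * (1 - cst)⁻¹ * ∑' j : ℕ, cst ^ j * (j : ℝ) ^ 2)}) ∧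
    (4 * (4 * (1 - cst)⁻¹ * ∑' j : ℕ, cst ^ j * (j : ℝ) ^ 2))⁻¹
      ≤ sInf {x : ℝ | ∃ n : ℕ, 1 ≤ n ∧ x = (n : ℝ)⁻¹ * ∫ a, R n a ∂ℙ} :=
  stmt18_general ℙ cst h0 h1 c hm hnn hcpos hE R hRint hR
end
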